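/- Every backoff model can be converted into an equivalent non-emitting backoff model with a complete state transition dictionary: let θ be a valid backoff model over A whose dictionary contexts all have length at most n. Define θ' to be the non-emitting backoff model with complete dictionary E' = {(c,y) : c ∈ A^i, 0 ≤ i ≤ n, y ∈ A} and transition probabilities δ'(y|c) = p_b(y|c, θ). Then p_ε(x^T | θ') = p_b(x^T | θ) for every T and every string x^T ∈ A^T. -/
import Mathlib


open Finset

/-- The set `E(x)` of symbols available in context `x` in the dictionary `E`. -/
def Ectx {A : Type*} [DecidableEq A] (E : Finset (List A × A)) (x : List A) :
    Finset A :=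
  (E.filter (fun p => p.1 = x)).image Prod.snd

/-- Backoff model conditional probability `p_b(y|x)`: if `(x,y) ∈ E` it is
`δ(y|x)`; otherwise it backs off to the suffix `x.tail`, rescaled by
`η(x) = (1 − ∑_{z∈E(x)} δ(z|x)) / (1 − ∑_{z∈E(x)} p_b(z|x.tail))`. -/
noncomputable def pb {A : Type*} [Fintype A] [DecidableEq A]
    (E : Finset (List A × A)) (d : List A → A → ℝ) : List A → A → ℝ
  | [], y => if ([], y) ∈ E then d [] y else 0
  | a :: x, y =>
      if (a :: x, y) ∈ E then d (a :: x) y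
      else
        ((1 - ∑ z ∈ Ectx E (a :: x), d (a :: x) z) /
            (1 - ∑ z ∈ Ectx E (a :: x), pb E d x z)) * pb E d x y

/-- Backoff model string probability: probability of emitting `w` after history `h`. -/
noncomputable def pbStr {A : Type*} [Fintype A] [DecidableEq A]
    (E : Finset (List A × A)) (d : List A → A → ℝ) : List A → List A → ℝ
  | _, [] => 1
  | h, y :: w => pb E d h y * pbStr E d (h ++ [y]) w
/-- The rescalar `η(x)` of a backoff model. -/
noncomputable def eta {A : Type*} [Fintype A] [DecidableEq A]
    (E : Finset (List A × A)) (d : List A → A → ℝ) (x : List A) : ℝ :=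
  (1 - ∑ z ∈ Ectx E x, d x z) / (1 - ∑ z ∈ Ectx E x, pb E d x.tail z)

/-- Non-emitting backoff model: probability of emitting the string `w` from
state `x`; backoff from `x` to its suffix `x.tail` is permanent. -/
noncomputable def peb {A : Type*} [Fintype A] [DecidableEq A]
    (E : Finset (List A × A)) (d : List A → A → ℝ) : List A → List A → ℝ
  | _, [] => 1
  | [], y :: w => if ([], y) ∈ E then d [] y * peb E d [y] w else 0
  | a :: x, y :: w =>
      if (a :: x, y) ∈ E then d (a :: x) y * peb E d ((a :: x) ++ [y]) w
      else eta E d (a :: x) * peb E d x (y :: w)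
termination_by x w => (w.length, x.length)
/-- Validity conditions for a backoff model `(E, d)`: every 0th order
transition is in `E` with a strictly positive distribution; dictionary
transitions have strictly positive probability; and in every nonempty context
the dictionary probabilities sum to `1` if all symbols are available and to
strictly less than `1` otherwise. -/
def ValidBackoff {A : Type*} [Fintype A] [DecidableEq A]
    (E : Finset (List A × A)) (d : List A → A → ℝ) : Prop :=
  (∀ y : A, ([], y) ∈ E) ∧ (∀ y : A, 0 < d [] y) ∧ (∑ y : A, d [] y = 1) ∧
  (∀ (x : List A) (y : A), x ≠ [] → (x, y) ∈ E → 0 < d x y) ∧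
  (∀ x : List A, x ≠ [] →
    (Ectx E x = Finset.univ → ∑ y ∈ Ectx E x, d x y = 1) ∧
    (Ectx E x ≠ Finset.univ → ∑ y ∈ Ectx E x, d x y < 1))
/-- The finset of all strings over `A` of length `i`. -/
def listsLen (A : Type*) [Fintype A] [DecidableEq A] (i : ℕ) : Finset (List A) :=
  Finset.image (fun f : Fin i → A => List.ofFn f) Finset.univ

/-- The complete state transition dictionary of order `n`: all pairs `(c, y)`
with `c` a context of length at most `n` and `y` a symbol. -/
def completeE (A : Type*) [Fintype A] [DecidableEq A] (n : ℕ) :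
    Finset (List A × A) :=
  ((Finset.range (n + 1)).biUnion (listsLen A)) ×ˢ Finset.univ


section Aux

variable {A : Type*} [Fintype A] [DecidableEq A]

lemma mem_listsLen {i : ℕ} {x : List A} : x ∈ listsLen A i ↔ x.length = i := by
  constructor
  · intro hx
    simp only [listsLen, Finset.mem_image, Finset.mem_univ, true_and] at hx
    obtain ⟨f, rfl⟩ := hx
    simp
  · rintro rfl
    simp only [listsLen, Finset.mem_image, Finset.mem_univ, true_and]
    exact ⟨x.get, List.ofFn_get x⟩

lemma mem_completeE {n : ℕ} {x : List A} {y : A} :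
    (x, y) ∈ completeE A n ↔ x.length ≤ n := by
  simp only [completeE, Finset.mem_product, Finset.mem_univ, and_true,
    Finset.mem_biUnion, Finset.mem_range, mem_listsLen]
  constructor
  · rintro ⟨i, hi, rfl⟩; omega
  · intro hx; exact ⟨x.length, by omega, rfl⟩

lemma Ectx_empty {n : ℕ} {E : Finset (List A × A)} (hn : ∀ p ∈ E, p.1.length ≤ n)
    {x : List A} (hx : n < x.length) : Ectx E x = ∅ := by
  rw [Ectx, Finset.image_eq_empty, Finset.filter_eq_empty_iff]
  intro p hp hpx
  have := hn p hp
  rw [hpx] at this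
  omega

lemma pb_tail {n : ℕ} {E : Finset (List A × A)} {d : List A → A → ℝ}
    (hn : ∀ p ∈ E, p.1.length ≤ n) {a : A} {x : List A} (hx : n ≤ x.length)
    (y : A) : pb E d (a :: x) y = pb E d x y := by
  have h1 : (a :: x, y) ∉ E := by
    intro hmem; have := hn _ hmem; simp at this; omega
  have h2 : Ectx E (a :: x) = ∅ := Ectx_empty hn (by simp; omega)
  rw [pb, if_neg h1, h2]
  simp

lemma pb_suffix {n : ℕ} {E : Finset (List A × A)} {d : List A → A → ℝ}
    (hn : ∀ p ∈ E, p.1.length ≤ n) :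
    ∀ (h x : List A), x <:+ h → (x.length = h.length ∨ n ≤ x.length) →
      ∀ y, pb E d x y = pb E d h y := by
  intro h
  induction h with
  | nil => intro x hx _ y; rw [List.suffix_nil] at hx; rw [hx]
  | cons a t ih =>
    intro x hx hlen y
    rcases List.suffix_cons_iff.mp hx with h1 | h1
    · rw [h1]
    · have hxt : x.length ≤ t.length := h1.length_le
      have hn' : n ≤ x.length := by
        rcases hlen with h2 | h2
        · simp at h2; omega
        · exact h2
      rw [pb_tail hn (le_trans hn' hxt) y]
      exact ih x h1 (Or.inr hn') y

lemma peb_backoff {n : ℕ} {d : List A → A → ℝ} {a : A} {x : List A}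
    (hx : n ≤ x.length) (w : List A) :
    peb (completeE A n) d (a :: x) w = peb (completeE A n) d x w := by
  cases w with
  | nil => rw [peb, peb]
  | cons y w =>
    have h1 : (a :: x, y) ∉ completeE A n := by
      rw [mem_completeE]; simp; omega
    have h2 : Ectx (completeE A n) (a :: x) = ∅ :=
      Ectx_empty (n := n) (fun p hp => by
        obtain ⟨c, z⟩ := p; exact mem_completeE.mp hp) (by simp; omega)
    rw [peb, if_neg h1, eta, h2]
    simp

lemma peb_emit {n : ℕ} {d : List A → A → ℝ} {x : List A} (hx : x.length ≤ n)
    (y : A) (w : List A) :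
    peb (completeE A n) d x (y :: w) =
      d x y * peb (completeE A n) d (x ++ [y]) w := by
  cases x with
  | nil => rw [peb, if_pos (mem_completeE.mpr (by simp))]; rfl
  | cons a t => rw [peb, if_pos (mem_completeE.mpr hx)]

lemma peb_main {n : ℕ} {E : Finset (List A × A)} {d : List A → A → ℝ}
    (hn : ∀ p ∈ E, p.1.length ≤ n) :
    ∀ (w h x : List A), x <:+ h → (x.length = h.length ∨ n ≤ x.length) →
      x.length ≤ n →
      peb (completeE A n) (fun c y => pb E d c y) x w = pbStr E d h w := by
  intro w
  induction w with
  | nil => intro h x _ _ _; rw [peb, pbStr]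
  | cons y w ih =>
    intro h x hsuf hlen hxn
    rw [peb_emit hxn, pbStr]
    have hpb : pb E d x y = pb E d h y := pb_suffix hn h x hsuf hlen y
    rw [hpb]
    congr 1
    have hsuf' : x ++ [y] <:+ h ++ [y] := by
      obtain ⟨t, rfl⟩ := hsuf
      exact ⟨t, by simp⟩
    rcases lt_or_eq_of_le hxn with hlt | heq
    · apply ih (h ++ [y]) (x ++ [y]) hsuf' _ (by simp; omega)
      rcases hlen with h2 | h2
      · left; simp [h2]
      · right; omega
    · have hlenxy : (x ++ [y]).length = n + 1 := by simp [heq]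
      have htail : (x ++ [y]).tail <:+ h ++ [y] :=
        (List.tail_suffix _).trans hsuf'
      have hlt : n ≤ (x ++ [y]).tail.length := by
        rw [List.length_tail, hlenxy]; omega
      have hb : peb (completeE A n) (fun c y => pb E d c y) (x ++ [y]) w =
          peb (completeE A n) (fun c y => pb E d c y) (x ++ [y]).tail w := by
        cases hxy : x ++ [y] with
        | nil => simp at hxy
        | cons a t =>
          rw [hxy] at hlenxy
          simp at hlenxy
          exact peb_backoff (by omega) w
      rw [hb]
      exact ih (h ++ [y]) (x ++ [y]).tail htail (Or.inr hlt)
        (by rw [List.length_tail, hlenxy]; omega)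

end Aux

/-- Every valid backoff model whose dictionary contexts have length at most
`n` can be converted into an equivalent non-emitting backoff model with the
complete order-`n` dictionary, taking `δ'(y|c) = p_b(y|c,θ)`: both models
assign the same probability to every string. -/
theorem backoff_eq_nonemitting_backoff_complete {A : Type*} [Fintype A]
    [DecidableEq A] (n : ℕ) (E : Finset (List A × A)) (d : List A → A → ℝ)
    (h : ValidBackoff E d) (hn : ∀ p ∈ E, p.1.length ≤ n) :
    ∀ w : List A,
      peb (completeE A n) (fun c y => pb E d c y) [] w = pbStr E d [] w := by
  intro w
  exact peb_main hn w [] [] ⟨[], rfl⟩ (Or.inl rfl) (Nat.zero_le n)
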